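/- arXiv:2408.15990 — 2 statements merged into one kernel-verified Lean document; each statement's English description precedes it below -/
import Mathlib

section
/- Consider the closed-loop system: dλ₁/dt = max{-ζ(t), -λ₁(t)/ε}, dπ/dt = K₁λ₁(t) - K₂ζ(t) with K₁, K₂ > 0, where ζ(t) = C₁ - q₁ - q₂/(1 + exp(α*(u(t) - π* w(t)))) and u(t) = π(t)w(t) + ln((q₁ + q₂ - C₁)/(C₁ - q₁))/α*. At any equilibrium state (defined by dλ₁/dt = 0 and dπ/dt = 0), one has λ₁ = 0, ζ = 0, and π = π* provided w(t) ≠ 0. -/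
/-!
At an equilibrium one of the two branches of the max vanishes, so `ζ = 0` or `λ₁ = 0`, and the
integral controller `K₁λ₁ = K₂ζ` then forces the other one to vanish as well. With `ζ = 0` the
logit share is pinned down, `exp (α*(u - π*w)) = (q₁ + q₂ - C₁)/(C₁ - q₁)`; the calibration
constant in `u` is exactly the logarithm of this ratio, so `α*(π - π*)w = 0`.
-/

lemma eq_zero_or_eq_zero_of_max_neg_eq_zero {a b : ℝ} (h : max (-a) (-b) = 0) :
    a = 0 ∨ b = 0 :=
  (max_choice (-a) (-b)).imp (fun ha => neg_eq_zero.mp (ha.symm.trans h))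
    (fun hb => neg_eq_zero.mp (hb.symm.trans h))

lemma eq_zero_and_eq_zero_of_mul_sub_mul_eq_zero {K₁ K₂ x y : ℝ} (hK₁ : K₁ ≠ 0) (hK₂ : K₂ ≠ 0)
    (h : K₁ * x - K₂ * y = 0) (hxy : x = 0 ∨ y = 0) : x = 0 ∧ y = 0 := by
  rcases hxy with rfl | rfl
  · simpa [hK₂] using h
  · simpa [hK₁] using h

lemma eq_log_of_sub_sub_div_one_add_exp_eq_zero {C₁ q₁ q₂ t : ℝ} (hq₁ : q₁ ≠ C₁)
    (h : C₁ - q₁ - q₂ / (1 + Real.exp t) = 0) : t = Real.log ((q₁ + q₂ - C₁) / (C₁ - q₁)) := by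
  have hC₁q₁ : C₁ - q₁ ≠ 0 := sub_ne_zero.mpr hq₁.symm
  have hexp : Real.exp t = (q₁ + q₂ - C₁) / (C₁ - q₁) := by
    have hden : 1 + Real.exp t ≠ 0 := by positivity
    field_simp at h ⊢
    linarith
  rw [← hexp, Real.log_exp]

theorem stmt_3_general (C₁ q₁ q₂ πs αs K₁ K₂ ε : ℝ)
    (hq₁C : q₁ < C₁)
    (hα : 0 < αs) (hK₁ : 0 < K₁) (hK₂ : 0 < K₂) (hε : 0 < ε)
    (lam₁ ζ w π u : ℝ)
    (hu : u = π * w + Real.log ((q₁ + q₂ - C₁) / (C₁ - q₁)) / αs)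
    (hζ : ζ = C₁ - q₁ - q₂ / (1 + Real.exp (αs * (u - πs * w))))
    (heq₁ : max (-ζ) (-(lam₁ / ε)) = 0)
    (heq₂ : K₁ * lam₁ - K₂ * ζ = 0) :
    lam₁ = 0 ∧ ζ = 0 ∧ (w ≠ 0 → π = πs) := by
  have hbranch : lam₁ = 0 ∨ ζ = 0 :=
    (eq_zero_or_eq_zero_of_max_neg_eq_zero heq₁).symm.imp_left
      fun h => (div_eq_zero_iff.mp h).resolve_right hε.ne'
  obtain ⟨hlam₁, hζ₀⟩ :=
    eq_zero_and_eq_zero_of_mul_sub_mul_eq_zero hK₁.ne' hK₂.ne' heq₂ hbranch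
  refine ⟨hlam₁, hζ₀, fun hw => ?_⟩
  have hlogit := eq_log_of_sub_sub_div_one_add_exp_eq_zero hq₁C.ne (hζ ▸ hζ₀)
  have hprice : αs * (π - πs) * w = 0 := by
    rw [hu] at hlogit
    field_simp at hlogit
    linarith
  have hαπ : αs * (π - πs) = 0 := (mul_eq_zero.mp hprice).resolve_right hw
  linarith [(mul_eq_zero.mp hαπ).resolve_left hα.ne']

/-- Equilibrium of the closed-loop system: with `dλ₁/dt = max(-ζ, -λ₁/ε)`,
`dπ/dt = K₁λ₁ - K₂ζ`, logit residual capacity and controller price, at any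
equilibrium (both derivatives zero) one has `λ₁ = 0`, `ζ = 0`, and, provided
`w ≠ 0`, `π = π*`. -/
theorem stmt_3 (C₁ C₂ q₁ q₂ πs αs K₁ K₂ ε : ℝ)
    (hq₁ : 0 < q₁) (hq₁C : q₁ < C₁) (hdem : q₁ + q₂ > C₁ + C₂) (hC₂ : 0 < C₂)
    (hπ : 0 < πs) (hα : 0 < αs) (hK₁ : 0 < K₁) (hK₂ : 0 < K₂) (hε : 0 < ε)
    (lam₁ ζ w π u : ℝ) (hlam₁ : 0 ≤ lam₁)
    (hu : u = π * w + Real.log ((q₁ + q₂ - C₁) / (C₁ - q₁)) / αs)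
    (hζ : ζ = C₁ - q₁ - q₂ / (1 + Real.exp (αs * (u - πs * w))))
    (heq₁ : max (-ζ) (-(lam₁ / ε)) = 0)
    (heq₂ : K₁ * lam₁ - K₂ * ζ = 0) :
    lam₁ = 0 ∧ ζ = 0 ∧ (w ≠ 0 → π = πs) :=
  stmt_3_general C₁ q₁ q₂ πs αs K₁ K₂ ε hq₁C hα hK₁ hK₂ hε lam₁ ζ w π u hu hζ heq₁ heq₂
end

section
/- With the single integral pricing controller u(t+Δt) = u(t) + K_I(q_{HOT}(t) - q*_{HOT}) with K_I > 0 and constant demands: if the system is at the desired state q_{HOT}(t) = q*_{HOT} at some time with u held constant, but the queuing-time difference w(t) strictly increases with t, then the logit demand q_{HOT}(t+Δt) = q₁ + q₂/(1 + exp(α*(u - π* w(t+Δt)))) strictly exceeds q*_{HOT}; i.e., the desired state is not invariant under the feedback law. -/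
lemma strictAnti_div_one_add_exp {c : ℝ} (hc : 0 < c) :
    StrictAnti fun y : ℝ => c / (1 + Real.exp y) := fun _ _ hxy =>
  div_lt_div_of_pos_left hc (by positivity) (by gcongr)

lemma strictMono_logitDemand (q₁ : ℝ) {q₂ α π : ℝ} (u : ℝ) (hq₂ : 0 < q₂) (hα : 0 < α)
    (hπ : 0 < π) : StrictMono fun x : ℝ => q₁ + q₂ / (1 + Real.exp (α * (u - π * x))) := by
  have hexponent : StrictAnti fun x : ℝ => α * (u - π * x) := fun _ _ hxy => by
    dsimp only
    gcongr
  exact ((strictAnti_div_one_add_exp hq₂).comp hexponent).const_add q₁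

/-- The single integral pricing controller cannot keep the desired state:
if at time `t` the HOT demand equals the desired value `q*` under price `u`
held constant, but the queuing-time difference strictly increases, then the
logit HOT demand at `t + Δt` strictly exceeds `q*`. -/
theorem stmt_11 (q₁ q₂ αs πs qstar u Δt t : ℝ)
    (hq₂ : 0 < q₂) (hα : 0 < αs) (hπ : 0 < πs) (hΔt : 0 < Δt)
    (w : ℝ → ℝ) (hw : StrictMono w)
    (hdes : q₁ + q₂ / (1 + Real.exp (αs * (u - πs * w t))) = qstar) :
    q₁ + q₂ / (1 + Real.exp (αs * (u - πs * w (t + Δt)))) > qstar :=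
  hdes ▸ ((strictMono_logitDemand q₁ u hq₂ hα hπ).comp hw) (lt_add_of_pos_right t hΔt)
end
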